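/- Let σ' be a nonempty finite CNN request sequence whose last request is r' = r(x',y'), and let σ'' = σ', r(x'',y''). Fix λ ∈ (0,1) and α with 0 < α < (1−λ)/(2(1+λ)). Suppose F_{W_{σ''}} attains its infimum over M³ at a triple (s_1,s_2,s_3) such that {s_1,s_2,s_3} has cardinality 1 or 2. Then inf G_{W_{σ''}} ≥ inf G_{W_{σ'}}. -/

import Mathlib

/-!
Appending a request can only raise the work function, so `W_{σ'} ≤ W_{σ''}`, and `F ≤ G`
because the pair `{s₁, s₂}` lies in its box. It therefore suffices to find a triple at which
`G_{W_{σ'}}` is at most `m = F_{W_{σ''}}(s₁, s₂, s₃)`. If `s₁ = s₂`, the pair and the box are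
both `{s₁}` and the triple itself works since `α ≤ 1`. Otherwise `s₃ ∈ {s₁, s₂}` has nonpositive
slack, so `m ≥ H_{W_{σ''}}(s₁, s₂) ≥ H_{W_{σ'}}(s₁, s₂)`, and replacing `s₃` by a minimiser of
`W_{σ'}` on the compact box makes the slack nonnegative. The bound on `α` makes `G ≥ 0`, so
both infima are finite.
-/

noncomputable section

/-- The L1 metric on `ℝ²` (the CNN metric space). -/
def dL1 (p q : ℝ × ℝ) : ℝ := |p.1 - q.1| + |p.2 - q.2|

/-- The CNN request associated with a point `(x, y)`. -/
def req (p : ℝ × ℝ) : Set (ℝ × ℝ) := {q | q.1 = p.1 ∨ q.2 = p.2}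

/-- The work function of a finite CNN request sequence (requests listed in order of arrival),
starting at origin `O`. -/
noncomputable def WF (O : ℝ × ℝ) : List (ℝ × ℝ) → (ℝ × ℝ) → ℝ
  | [], s => dL1 O s
  | p :: l, s => sInf ((fun t => dL1 O t + WF t l s) '' req p)

/-- The slack of a point `s` to a nonempty set `C` with respect to `W`. -/
noncomputable def Sl (lam : ℝ) (W : ℝ × ℝ → ℝ) (s : ℝ × ℝ) (C : Set (ℝ × ℝ)) : ℝ :=
  sInf ((fun t => W t + lam * dL1 t s) '' C) - W s

/-- The rectangle spanned by two points of `ℝ²`. -/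
def Boks (s1 s2 : ℝ × ℝ) : Set (ℝ × ℝ) :=
  {p | p.1 ∈ Set.uIcc s1.1 s2.1 ∧ p.2 ∈ Set.uIcc s1.2 s2.2}

/-- `H_W(s₁,s₂) = (1/2)W(s₁) + (1/2)W(s₂) − (λ/2)d(s₁,s₂)`. -/
noncomputable def Hf (lam : ℝ) (W : ℝ × ℝ → ℝ) (s1 s2 : ℝ × ℝ) : ℝ :=
  (1 / 2) * W s1 + (1 / 2) * W s2 - (lam / 2) * dL1 s1 s2

/-- `F_W(s₁,s₂,s₃) = H_W(s₁,s₂) − α·Sl_W(s₃;{s₁,s₂})`. -/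
noncomputable def Ff (lam α : ℝ) (W : ℝ × ℝ → ℝ) (s1 s2 s3 : ℝ × ℝ) : ℝ :=
  Hf lam W s1 s2 - α * Sl lam W s3 {s1, s2}

/-- `G_W(s₁,s₂,s₃) = H_W(s₁,s₂) − α·Sl_W(s₃;Boks(s₁,s₂))`. -/
noncomputable def Gf (lam α : ℝ) (W : ℝ × ℝ → ℝ) (s1 s2 s3 : ℝ × ℝ) : ℝ :=
  Hf lam W s1 s2 - α * Sl lam W s3 (Boks s1 s2)

/-- `inf_{M³} G_W`. -/
noncomputable def infG (lam α : ℝ) (W : ℝ × ℝ → ℝ) : ℝ :=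
  sInf (Set.range fun q : (ℝ × ℝ) × (ℝ × ℝ) × (ℝ × ℝ) => Gf lam α W q.1 q.2.1 q.2.2)

lemma dL1_nonneg (p q : ℝ × ℝ) : 0 ≤ dL1 p q := by
  unfold dL1; positivity

@[simp]
lemma dL1_self (p : ℝ × ℝ) : dL1 p p = 0 := by simp [dL1]

lemma dL1_comm (p q : ℝ × ℝ) : dL1 p q = dL1 q p := by
  simp only [dL1, abs_sub_comm]

lemma dL1_triangle (p q r : ℝ × ℝ) : dL1 p r ≤ dL1 p q + dL1 q r := by
  unfold dL1
  linarith [abs_sub_le p.1 q.1 r.1, abs_sub_le p.2 q.2 r.2]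

lemma dL1_le_two_mul_dist (p q : ℝ × ℝ) : dL1 p q ≤ 2 * dist p q := by
  have h1 := le_max_left (dist p.1 q.1) (dist p.2 q.2)
  have h2 := le_max_right (dist p.1 q.1) (dist p.2 q.2)
  rw [← Prod.dist_eq, Real.dist_eq] at h1 h2
  unfold dL1; linarith

lemma continuous_of_le_add_dL1 {W : ℝ × ℝ → ℝ} (hW : ∀ s s', W s ≤ W s' + dL1 s' s) :
    Continuous W := by
  refine (LipschitzWith.of_dist_le_mul (K := 2) fun s s' => ?_).continuous
  rw [Real.dist_eq, abs_sub_le_iff]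
  have := dL1_le_two_mul_dist s s'
  have := hW s s'
  have := hW s' s
  have := dL1_comm s s'
  push_cast
  constructor <;> linarith

lemma sInf_image_le_sInf_image_add {β : Type*} {S : Set β} {f g : β → ℝ} (hS : S.Nonempty)
    (hf : BddBelow (f '' S)) {c : ℝ} (h : ∀ x ∈ S, f x ≤ g x + c) :
    sInf (f '' S) ≤ sInf (g '' S) + c := by
  rw [← sub_le_iff_le_add]
  refine le_csInf (hS.image g) ?_
  rintro _ ⟨x, hx, rfl⟩
  rw [sub_le_iff_le_add]
  exact (csInf_le hf ⟨x, hx, rfl⟩).trans (h x hx)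

lemma req_nonempty (p : ℝ × ℝ) : (req p).Nonempty := ⟨p, Or.inl rfl⟩

lemma dL1_le_WF (l : List (ℝ × ℝ)) (O s : ℝ × ℝ) : dL1 O s ≤ WF O l s := by
  induction l generalizing O with
  | nil => exact le_rfl
  | cons p l ih =>
    refine le_csInf ((req_nonempty p).image _) ?_
    rintro _ ⟨t, _, rfl⟩
    linarith [dL1_triangle O t s, ih t]

lemma WF_nonneg (O : ℝ × ℝ) (l : List (ℝ × ℝ)) (s : ℝ × ℝ) : 0 ≤ WF O l s :=
  (dL1_nonneg O s).trans (dL1_le_WF l O s)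

lemma bddBelow_WF_image (O : ℝ × ℝ) (l : List (ℝ × ℝ)) (s : ℝ × ℝ) (C : Set (ℝ × ℝ)) :
    BddBelow ((fun t => dL1 O t + WF t l s) '' C) := by
  refine ⟨0, ?_⟩
  rintro _ ⟨t, _, rfl⟩
  exact add_nonneg (dL1_nonneg O t) (WF_nonneg t l s)

lemma WF_le_WF_add_dL1 (l : List (ℝ × ℝ)) (O s s' : ℝ × ℝ) :
    WF O l s ≤ WF O l s' + dL1 s' s := by
  induction l generalizing O with
  | nil => exact dL1_triangle O s' s
  | cons p l ih =>
    refine sInf_image_le_sInf_image_add (req_nonempty p) (bddBelow_WF_image O l s _) ?_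
    intro t _
    linarith [ih t]

lemma WF_le_WF_append (O : ℝ × ℝ) (l m : List (ℝ × ℝ)) (s : ℝ × ℝ) :
    WF O l s ≤ WF O (l ++ m) s := by
  induction l generalizing O with
  | nil => exact dL1_le_WF m O s
  | cons p l ih =>
    have h : WF O (p :: l) s ≤ WF O (p :: l ++ m) s + 0 :=
      sInf_image_le_sInf_image_add (req_nonempty p) (bddBelow_WF_image O l s _)
        fun t _ => by rw [add_zero]; exact add_le_add_right (ih t) _
    rwa [add_zero] at h

lemma left_mem_Boks (s1 s2 : ℝ × ℝ) : s1 ∈ Boks s1 s2 :=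
  ⟨Set.left_mem_uIcc, Set.left_mem_uIcc⟩

lemma right_mem_Boks (s1 s2 : ℝ × ℝ) : s2 ∈ Boks s1 s2 :=
  ⟨Set.right_mem_uIcc, Set.right_mem_uIcc⟩

lemma corner_mem_Boks (s1 s2 : ℝ × ℝ) : (s1.1, s2.2) ∈ Boks s1 s2 :=
  ⟨Set.left_mem_uIcc, Set.right_mem_uIcc⟩

lemma dL1_corner_add (s1 s2 : ℝ × ℝ) :
    dL1 s1 (s1.1, s2.2) + dL1 (s1.1, s2.2) s2 = dL1 s1 s2 := by
  simp only [dL1, sub_self, abs_zero]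
  ring

lemma pair_subset_Boks (s1 s2 : ℝ × ℝ) : ({s1, s2} : Set (ℝ × ℝ)) ⊆ Boks s1 s2 :=
  Set.insert_subset (left_mem_Boks s1 s2) (Set.singleton_subset_iff.2 (right_mem_Boks s1 s2))

@[simp]
lemma Boks_self (s : ℝ × ℝ) : Boks s s = {s} := by
  ext p
  simp [Boks, Prod.ext_iff]

lemma isCompact_Boks (s1 s2 : ℝ × ℝ) : IsCompact (Boks s1 s2) :=
  isCompact_uIcc.prod isCompact_uIcc

section Slack

variable {lam : ℝ} {W : ℝ × ℝ → ℝ}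

lemma bddBelow_Sl_image (hlam : 0 ≤ lam) (hW : ∀ s, 0 ≤ W s) (s : ℝ × ℝ) (C : Set (ℝ × ℝ)) :
    BddBelow ((fun t => W t + lam * dL1 t s) '' C) := by
  refine ⟨0, ?_⟩
  rintro _ ⟨t, _, rfl⟩
  exact add_nonneg (hW t) (mul_nonneg hlam (dL1_nonneg t s))

lemma Sl_le (hlam : 0 ≤ lam) (hW : ∀ s, 0 ≤ W s) {C : Set (ℝ × ℝ)} {t : ℝ × ℝ} (ht : t ∈ C)
    (s : ℝ × ℝ) : Sl lam W s C ≤ W t + lam * dL1 t s - W s :=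
  sub_le_sub_right (csInf_le (bddBelow_Sl_image hlam hW s C) ⟨t, ht, rfl⟩) _

lemma Sl_nonpos (hlam : 0 ≤ lam) (hW : ∀ s, 0 ≤ W s) {C : Set (ℝ × ℝ)} {s : ℝ × ℝ}
    (hs : s ∈ C) : Sl lam W s C ≤ 0 := by
  simpa using Sl_le hlam hW hs s

lemma Sl_anti (hlam : 0 ≤ lam) (hW : ∀ s, 0 ≤ W s) (s : ℝ × ℝ) {C D : Set (ℝ × ℝ)}
    (hC : C.Nonempty) (hCD : C ⊆ D) : Sl lam W s D ≤ Sl lam W s C :=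
  sub_le_sub_right (csInf_le_csInf (bddBelow_Sl_image hlam hW s D) (hC.image _)
    (Set.image_mono hCD)) _

lemma Sl_singleton (s t : ℝ × ℝ) : Sl lam W s {t} = W t + lam * dL1 t s - W s := by
  rw [Sl, Set.image_singleton, csInf_singleton]

lemma Sl_nonneg_of_isMinOn (hlam : 0 ≤ lam) {C : Set (ℝ × ℝ)} {c : ℝ × ℝ} (hC : C.Nonempty)
    (hc : IsMinOn W C c) : 0 ≤ Sl lam W c C := by
  rw [Sl, sub_nonneg]
  refine le_csInf (hC.image _) ?_
  rintro _ ⟨t, ht, rfl⟩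
  linarith [isMinOn_iff.1 hc t ht, mul_nonneg hlam (dL1_nonneg t c)]

/-- `W c` is at least `W t - d(t,c)` (Lipschitz) and at least `d(t,c) - W t`
(as `W ≥ d(O,·)`). -/
lemma Sl_le_one_add_mul (hlam0 : 0 ≤ lam) (hlam1 : lam ≤ 1) {O : ℝ × ℝ}
    (hWO : ∀ s, dL1 O s ≤ W s) (hW : ∀ s s', W s ≤ W s' + dL1 s' s) {C : Set (ℝ × ℝ)}
    {t : ℝ × ℝ} (ht : t ∈ C) (c : ℝ × ℝ) : Sl lam W c C ≤ (1 + lam) * W t := by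
  have hpos : ∀ s, 0 ≤ W s := fun s => (dL1_nonneg O s).trans (hWO s)
  have hSl := Sl_le hlam0 hpos ht c
  have hc₁ : W t - dL1 t c ≤ W c := by linarith [hW t c, dL1_comm c t]
  have hc₂ : dL1 t c - W t ≤ W c := by
    linarith [dL1_triangle t O c, dL1_comm t O, hWO t, hWO c]
  rcases le_total (dL1 t c) (W t) with h | h
  · nlinarith
  · nlinarith

end Slack

section Potentials

variable {lam α : ℝ} {W : ℝ × ℝ → ℝ}

lemma Ff_le_Gf (hlam : 0 ≤ lam) (hα : 0 ≤ α) (hW : ∀ s, 0 ≤ W s) (s1 s2 s3 : ℝ × ℝ) :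
    Ff lam α W s1 s2 s3 ≤ Gf lam α W s1 s2 s3 := by
  have := mul_le_mul_of_nonneg_left
    (Sl_anti hlam hW s3 (Set.insert_nonempty s1 {s2}) (pair_subset_Boks s1 s2)) hα
  unfold Ff Gf
  linarith

/-- The corner `t = (a.1, b.2)` of the box lies on a geodesic from `a` to `b`, so
`2 W t ≤ W a + W b + d(a,b)`. -/
lemma Gf_nonneg (hlam0 : 0 ≤ lam) (hlam1 : lam ≤ 1) (hα0 : 0 ≤ α)
    (hα1 : 2 * α * (1 + lam) ≤ 1 - lam) {O : ℝ × ℝ} (hWO : ∀ s, dL1 O s ≤ W s)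
    (hW : ∀ s s', W s ≤ W s' + dL1 s' s) (a b c : ℝ × ℝ) : 0 ≤ Gf lam α W a b c := by
  set t : ℝ × ℝ := (a.1, b.2)
  have hSl := Sl_le_one_add_mul hlam0 hlam1 hWO hW (corner_mem_Boks a b) c
  have ht : 2 * W t ≤ W a + W b + dL1 a b := by
    linarith [hW t a, hW t b, dL1_corner_add a b, dL1_comm b t]
  have hab : dL1 a b ≤ W a + W b := by
    linarith [dL1_triangle a O b, dL1_comm a O, hWO a, hWO b]
  have hαSl := mul_le_mul_of_nonneg_left hSl hα0
  have hαt := mul_le_mul_of_nonneg_left ht (by positivity : 0 ≤ α * (1 + lam))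
  have hlamab := mul_le_mul_of_nonneg_left hab (by positivity : 0 ≤ lam + α * (1 + lam))
  have hWab := mul_le_mul_of_nonneg_left (add_nonneg ((dL1_nonneg O a).trans (hWO a))
    ((dL1_nonneg O b).trans (hWO b))) (by linarith : 0 ≤ 1 - lam - 2 * α * (1 + lam))
  unfold Gf Hf
  nlinarith

lemma infG_le_Gf (hlam0 : 0 ≤ lam) (hlam1 : lam ≤ 1) (hα0 : 0 ≤ α)
    (hα1 : 2 * α * (1 + lam) ≤ 1 - lam) {O : ℝ × ℝ} (hWO : ∀ s, dL1 O s ≤ W s)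
    (hW : ∀ s s', W s ≤ W s' + dL1 s' s) (a b c : ℝ × ℝ) :
    infG lam α W ≤ Gf lam α W a b c :=
  csInf_le ⟨0, by rintro _ ⟨q, rfl⟩; exact Gf_nonneg hlam0 hlam1 hα0 hα1 hWO hW _ _ _⟩
    ⟨(a, b, c), rfl⟩

lemma le_infG {m : ℝ} (h : ∀ a b c, m ≤ Gf lam α W a b c) : m ≤ infG lam α W :=
  le_csInf (Set.range_nonempty _) (by rintro _ ⟨q, rfl⟩; exact h _ _ _)

lemma Hf_mono {W' : ℝ × ℝ → ℝ} (hWW' : ∀ s, W s ≤ W' s) (s1 s2 : ℝ × ℝ) :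
    Hf lam W s1 s2 ≤ Hf lam W' s1 s2 := by
  unfold Hf
  linarith [hWW' s1, hWW' s2]

lemma Hf_le_Ff_of_mem (hlam : 0 ≤ lam) (hα : 0 ≤ α) (hW : ∀ s, 0 ≤ W s) {s1 s2 s3 : ℝ × ℝ}
    (hs3 : s3 ∈ ({s1, s2} : Set (ℝ × ℝ))) : Hf lam W s1 s2 ≤ Ff lam α W s1 s2 s3 := by
  have := mul_nonpos_of_nonneg_of_nonpos hα (Sl_nonpos hlam hW hs3)
  unfold Ff
  linarith

lemma exists_Gf_le_Hf (hlam : 0 ≤ lam) (hα : 0 ≤ α) (hW : Continuous W) (s1 s2 : ℝ × ℝ) :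
    ∃ c, Gf lam α W s1 s2 c ≤ Hf lam W s1 s2 := by
  have hne : (Boks s1 s2).Nonempty := ⟨s1, left_mem_Boks s1 s2⟩
  obtain ⟨c, -, hc⟩ := (isCompact_Boks s1 s2).exists_isMinOn hne hW.continuousOn
  refine ⟨c, ?_⟩
  have := mul_nonneg hα (Sl_nonneg_of_isMinOn hlam hne hc)
  unfold Gf
  linarith

lemma Gf_self_le_Ff_self (hα0 : 0 ≤ α) (hα1 : α ≤ 1) {W' : ℝ × ℝ → ℝ}
    (hWW' : ∀ s, W s ≤ W' s) (s c : ℝ × ℝ) : Gf lam α W s s c ≤ Ff lam α W' s s c := by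
  have h₁ := mul_le_mul_of_nonneg_left (hWW' s) (sub_nonneg.2 hα1)
  have h₂ := mul_le_mul_of_nonneg_left (hWW' c) hα0
  simp only [Gf, Ff, Hf, Boks_self, Set.pair_eq_singleton, Sl_singleton, dL1_self]
  linarith

end Potentials

lemma eq_or_mem_pair_of_ncard_le_two {β : Type*} {a b c : β}
    (h : ({a, b, c} : Set β).ncard ≤ 2) : a = b ∨ c ∈ ({a, b} : Set β) := by
  by_contra! hne
  obtain ⟨hab, hca, hcb⟩ : a ≠ b ∧ c ≠ a ∧ c ≠ b := by simpa [not_or] using hne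
  have : ({a, b, c} : Set β).ncard = 3 :=
    Set.ncard_eq_three.2 ⟨a, b, c, hab, hca.symm, hcb.symm, rfl⟩
  omega

/-- If `F_{W_{σ''}}` is minimized at a triple `(s₁,s₂,s₃)` with `{s₁,s₂,s₃}` of cardinality
1 or 2, then `inf G_{W_{σ''}} ≥ inf G_{W_{σ'}}`. -/
theorem infG_nondecreasing (lam α : ℝ) (h0 : 0 < lam) (h1 : lam < 1)
    (hα0 : 0 < α) (hα1 : α < (1 - lam) / (2 * (1 + lam)))
    (O : ℝ × ℝ) (l : List (ℝ × ℝ)) (x' y' x'' y'' : ℝ) (s1 s2 s3 : ℝ × ℝ)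
    (hmin : ∀ t1 t2 t3 : ℝ × ℝ,
      Ff lam α (WF O (l ++ [(x', y'), (x'', y'')])) s1 s2 s3 ≤
        Ff lam α (WF O (l ++ [(x', y'), (x'', y'')])) t1 t2 t3)
    (hcard : ({s1, s2, s3} : Set (ℝ × ℝ)).ncard ≤ 2) :
    infG lam α (WF O (l ++ [(x', y'), (x'', y'')])) ≥
      infG lam α (WF O (l ++ [(x', y')])) := by
  set W' := WF O (l ++ [(x', y')])
  set W'' := WF O (l ++ [(x', y'), (x'', y'')])
  have hα : 2 * α * (1 + lam) ≤ 1 - lam := by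
    rw [lt_div_iff₀ (by linarith)] at hα1; linarith
  have hW'W'' : ∀ s, W' s ≤ W'' s := fun s => by
    simpa using WF_le_WF_append O (l ++ [(x', y')]) [(x'', y'')] s
  have hW''pos : ∀ s, 0 ≤ W'' s := WF_nonneg O _
  obtain ⟨a, b, c, hG'F''⟩ : ∃ a b c, Gf lam α W' a b c ≤ Ff lam α W'' s1 s2 s3 := by
    rcases eq_or_mem_pair_of_ncard_le_two hcard with rfl | hs3
    · exact ⟨s1, s1, s3, Gf_self_le_Ff_self hα0.le (by nlinarith) hW'W'' s1 s3⟩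
    · obtain ⟨c, hc⟩ := exists_Gf_le_Hf (α := α) h0.le hα0.le
        (continuous_of_le_add_dL1 (WF_le_WF_add_dL1 _ O)) s1 s2
      exact ⟨s1, s2, c, hc.trans ((Hf_mono hW'W'' s1 s2).trans
        (Hf_le_Ff_of_mem h0.le hα0.le hW''pos hs3))⟩
  calc infG lam α W'
      ≤ Gf lam α W' a b c :=
        infG_le_Gf h0.le h1.le hα0.le hα (dL1_le_WF _ O) (WF_le_WF_add_dL1 _ O) a b c
    _ ≤ Ff lam α W'' s1 s2 s3 := hG'F''
    _ ≤ infG lam α W'' := le_infG fun t1 t2 t3 =>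
        (hmin t1 t2 t3).trans (Ff_le_Gf h0.le hα0.le hW''pos t1 t2 t3)
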